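/- arXiv:0904.1118 — 4 statements merged into one kernel-verified Lean document; each statement's English description precedes it below -/
import Mathlib

section
/- For all real t ≠ 0, cosh(t) < (sinh(t)/t)^3. -/
/-!
Clearing denominators, it suffices to show `f t = sinh t ^ 3 - t ^ 3 * cosh t > 0` for `t > 0`
(both sides are even in `t`). Since `f 0 = 0`, this follows from
`f' t = 3 (sinh² t - t²) cosh t - t³ sinh t > 0`, which combines two elementary bounds:
the Taylor bound `sinh t > t + t³ / 6` gives `3 (sinh² t - t²) > t⁴`, and `tanh t < t` gives
`t⁴ cosh t > t³ sinh t`. The Taylor bounds themselves follow by the same monotonicity argument.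
-/

lemma pos_of_hasDerivAt_pos_of_map_zero {f f' : ℝ → ℝ} (hf : ∀ x, HasDerivAt f (f' x) x)
    (h0 : f 0 = 0) (hf' : ∀ x > 0, 0 < f' x) {t : ℝ} (ht : 0 < t) : 0 < f t := by
  have hmono : StrictMonoOn f (Set.Ici 0) :=
    strictMonoOn_of_hasDerivWithinAt_pos (convex_Ici 0)
      (fun x _ ↦ (hf x).continuousAt.continuousWithinAt)
      (fun x _ ↦ (hf x).hasDerivWithinAt)
      (fun x hx ↦ hf' x (by simpa using hx))
  simpa [h0] using hmono Set.self_mem_Ici ht.le ht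

namespace Real

lemma one_add_sq_div_two_lt_cosh {x : ℝ} (hx : 0 < x) : 1 + x ^ 2 / 2 < cosh x := by
  have hderiv (y : ℝ) : HasDerivAt (fun y ↦ cosh y - (1 + y ^ 2 / 2)) (sinh y - y) y :=
    ((hasDerivAt_cosh y).sub (((hasDerivAt_pow 2 y).div_const 2).const_add 1)).congr_deriv
      (by ring)
  have := pos_of_hasDerivAt_pos_of_map_zero hderiv (by simp)
    (fun y hy ↦ sub_pos.2 (self_lt_sinh_iff.2 hy)) hx
  linarith

lemma add_pow_three_div_six_lt_sinh {x : ℝ} (hx : 0 < x) : x + x ^ 3 / 6 < sinh x := by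
  have hderiv (y : ℝ) :
      HasDerivAt (fun y ↦ sinh y - (y + y ^ 3 / 6)) (cosh y - (1 + y ^ 2 / 2)) y :=
    ((hasDerivAt_sinh y).sub
      ((hasDerivAt_id' y).add ((hasDerivAt_pow 3 y).div_const 6))).congr_deriv (by ring)
  have := pos_of_hasDerivAt_pos_of_map_zero hderiv (by simp)
    (fun y hy ↦ sub_pos.2 (one_add_sq_div_two_lt_cosh hy)) hx
  linarith

lemma sinh_lt_mul_cosh {x : ℝ} (hx : 0 < x) : sinh x < x * cosh x := by
  have hderiv (y : ℝ) : HasDerivAt (fun y ↦ y * cosh y - sinh y) (y * sinh y) y :=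
    (((hasDerivAt_id' y).mul (hasDerivAt_cosh y)).sub (hasDerivAt_sinh y)).congr_deriv
      (by ring)
  have := pos_of_hasDerivAt_pos_of_map_zero hderiv (by simp)
    (fun y hy ↦ mul_pos hy (sinh_pos_iff.2 hy)) hx
  linarith

lemma pow_four_lt_three_mul_sinh_sq_sub_sq {x : ℝ} (hx : 0 < x) :
    x ^ 4 < 3 * (sinh x ^ 2 - x ^ 2) := by
  have hsinh := add_pow_three_div_six_lt_sinh hx
  have hlow : 0 < x + x ^ 3 / 6 := by positivity
  have hsq : (x + x ^ 3 / 6) ^ 2 < sinh x ^ 2 := pow_lt_pow_left₀ hsinh hlow.le two_ne_zero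
  nlinarith [pow_pos hx 6]

lemma pow_three_mul_cosh_lt_sinh_pow_three {x : ℝ} (hx : 0 < x) :
    x ^ 3 * cosh x < sinh x ^ 3 := by
  have hderiv (y : ℝ) : HasDerivAt (fun y ↦ sinh y ^ 3 - y ^ 3 * cosh y)
      (3 * (sinh y ^ 2 - y ^ 2) * cosh y - y ^ 3 * sinh y) y :=
    (((hasDerivAt_sinh y).pow 3).sub
      ((hasDerivAt_pow 3 y).mul (hasDerivAt_cosh y))).congr_deriv (by ring)
  have hderiv_pos (y : ℝ) (hy : 0 < y) :
      0 < 3 * (sinh y ^ 2 - y ^ 2) * cosh y - y ^ 3 * sinh y := sub_pos.2 <|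
    calc y ^ 3 * sinh y
        < y ^ 3 * (y * cosh y) := mul_lt_mul_of_pos_left (sinh_lt_mul_cosh hy) (by positivity)
      _ = y ^ 4 * cosh y := by ring
      _ < 3 * (sinh y ^ 2 - y ^ 2) * cosh y :=
          mul_lt_mul_of_pos_right (pow_four_lt_three_mul_sinh_sq_sub_sq hy) (cosh_pos y)
  have := pos_of_hasDerivAt_pos_of_map_zero hderiv (by simp) hderiv_pos hx
  linarith

end Real

theorem lazarevic_inequality (t : ℝ) (ht : t ≠ 0) :
    Real.cosh t < (Real.sinh t / t) ^ 3 := by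
  wlog hpos : 0 < t generalizing t
  · have := this (-t) (neg_ne_zero.2 ht) (by grind)
    rwa [Real.cosh_neg, Real.sinh_neg, neg_div_neg_eq] at this
  rw [div_pow, lt_div_iff₀ (by positivity), mul_comm]
  exact Real.pow_three_mul_cosh_lt_sinh_pow_three hpos
end

section
/- For real numbers a < b, the function δ_{a,b}(t) = (b·e^{bt} − a·e^{at})/(e^{bt} − e^{at}) − 1/t is strictly increasing on (0, ∞). -/
/-!
Factoring out `exp (a t)` and putting `c = b - a > 0` gives
`δ_{a,b}(t) = b + c · g (c t)` with `g x = 1 / (exp x - 1) - 1 / x`, so it suffices that `g` is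
strictly increasing on `(0, ∞)`. Its derivative `1 / x² - exp x / (exp x - 1)²` is positive because
`x · exp (x / 2) < exp x - 1`, which is `x / 2 < sinh (x / 2)` multiplied by `2 · exp (x / 2)`.
-/

open Real Set

lemma mul_exp_half_lt_exp_sub_one {x : ℝ} (hx : 0 < x) : x * exp (x / 2) < exp x - 1 := by
  have hsinh : x / 2 < sinh (x / 2) := self_lt_sinh_iff.mpr (half_pos hx)
  have hsq : exp (x / 2) * exp (x / 2) = exp x := by rw [← exp_add, add_halves]
  have hinv : exp (-(x / 2)) * exp (x / 2) = 1 := by rw [← exp_add, neg_add_cancel, exp_zero]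
  rw [sinh_eq] at hsinh
  nlinarith [exp_pos (x / 2)]

lemma sq_mul_exp_lt_sq_exp_sub_one {x : ℝ} (hx : 0 < x) : x ^ 2 * exp x < (exp x - 1) ^ 2 :=
  calc x ^ 2 * exp x = (x * exp (x / 2)) ^ 2 := by rw [mul_pow, ← exp_nat_mul]; ring_nf
    _ < (exp x - 1) ^ 2 := by gcongr; exact mul_exp_half_lt_exp_sub_one hx

lemma strictMonoOn_one_div_exp_sub_one_sub_one_div :
    StrictMonoOn (fun x : ℝ => 1 / (exp x - 1) - 1 / x) (Ioi 0) := by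
  have hderiv : ∀ x ∈ Ioi (0 : ℝ), HasDerivAt (fun x : ℝ => 1 / (exp x - 1) - 1 / x)
      (1 / x ^ 2 - exp x / (exp x - 1) ^ 2) x := by
    intro x (hx : 0 < x)
    have hE : exp x - 1 ≠ 0 := (sub_pos.mpr (one_lt_exp_iff.mpr hx)).ne'
    simp only [one_div]
    exact ((((hasDerivAt_exp x).sub_const 1).inv hE).sub ((hasDerivAt_id x).inv hx.ne')).congr_deriv
      (by simp only [id_eq]; ring)
  refine strictMonoOn_of_deriv_pos (convex_Ioi 0)
    (fun x hx => (hderiv x hx).continuousAt.continuousWithinAt) ?_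
  rw [interior_Ioi]
  intro x (hx : 0 < x)
  have hE : 0 < exp x - 1 := sub_pos.mpr (one_lt_exp_iff.mpr hx)
  rw [(hderiv x hx).deriv, sub_pos, div_lt_div_iff₀ (by positivity) (by positivity), one_mul,
    mul_comm]
  exact sq_mul_exp_lt_sq_exp_sub_one hx

lemma exp_quotient_sub_one_div_eq {a b t : ℝ} (hab : a ≠ b) (ht : t ≠ 0) :
    (b * exp (b * t) - a * exp (a * t)) / (exp (b * t) - exp (a * t)) - 1 / t =
      b + (b - a) * (1 / (exp ((b - a) * t) - 1) - 1 / ((b - a) * t)) := by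
  have hc : b - a ≠ 0 := sub_ne_zero.mpr hab.symm
  have hF : exp ((b - a) * t) - 1 ≠ 0 := by
    rw [sub_ne_zero, Ne, exp_eq_one_iff]; exact mul_ne_zero hc ht
  have hsplit : exp (b * t) = exp (a * t) * exp ((b - a) * t) := by rw [← exp_add]; ring_nf
  have hE := (exp_pos (a * t)).ne'
  rw [hsplit, ← mul_sub_one]
  generalize exp ((b - a) * t) = F at hF ⊢
  field_simp
  ring

theorem delta_strictMonoOn (a b : ℝ) (hab : a < b) :
    StrictMonoOn (fun t : ℝ =>
      (b * Real.exp (b * t) - a * Real.exp (a * t)) /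
        (Real.exp (b * t) - Real.exp (a * t)) - 1 / t)
      (Set.Ioi (0 : ℝ)) := by
  have hc : 0 < b - a := sub_pos.mpr hab
  have hscaled : StrictMonoOn
      (fun t => b + (b - a) * (1 / (exp ((b - a) * t) - 1) - 1 / ((b - a) * t))) (Ioi 0) := by
    intro s (hs : 0 < s) t (ht : 0 < t) hst
    have := strictMonoOn_one_div_exp_sub_one_sub_one_div (mul_pos hc hs) (mul_pos hc ht)
      (mul_lt_mul_of_pos_left hst hc)
    dsimp only at this ⊢
    gcongr
  exact hscaled.congr fun t (ht : 0 < t) => (exp_quotient_sub_one_div_eq hab.ne ht.ne').symm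
end

section
/- For real numbers a < b, the limit of δ'_{a,b}(t) as t → 0⁺ equals (a − b)^2/12, where δ'_{a,b}(t) = 1/t^2 − (a−b)^2·e^{(a+b)t}/(e^{at} − e^{bt})^2. -/
/-!
Writing `c = (b - a) / 2`, one has `(e^{at} - e^{bt})^2 = 4 e^{(a+b)t} sinh^2 (ct)`, so
`δ'_{a,b}(t) = c^2 (1/u^2 - 1/sinh^2 u)` with `u = ct`. Since
`1/u^2 - 1/sinh^2 u = (sinh u - u)/u^3 · (sinh u/u + 1) · (u/sinh u)^2` and
`(sinh u - u)/u^3 → 1/6` (L'Hôpital twice), the limit is `c^2 · 1/3 = (a - b)^2/12`.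
-/

open Filter Real Set Topology

lemma Real.tendsto_sinh_div_self : Tendsto (fun u => sinh u / u) (𝓝[≠] 0) (𝓝 1) := by
  have h := hasDerivAt_iff_tendsto_slope_zero.mp (hasDerivAt_sinh 0)
  simpa [div_eq_inv_mul] using h

lemma Real.tendsto_cosh_sub_one_div_sq :
    Tendsto (fun u => (cosh u - 1) / u ^ 2) (𝓝[≠] 0) (𝓝 (1 / 2)) := by
  refine HasDerivAt.lhopital_zero_nhdsNE (f' := sinh) (g' := fun u => 2 * u)
    (.of_forall fun u => (hasDerivAt_cosh u).sub_const 1)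
    (.of_forall fun u => by simpa using hasDerivAt_pow 2 u)
    (eventually_mem_nhdsWithin.mono fun u hu => mul_ne_zero two_ne_zero hu) ?_ ?_ ?_
  · exact (Continuous.tendsto' (f := fun u => cosh u - 1) (by fun_prop) 0 0 (by simp)).mono_left
      nhdsWithin_le_nhds
  · simpa using (continuous_pow 2).tendsto' (0 : ℝ) 0 (by simp) |>.mono_left nhdsWithin_le_nhds
  · simpa [div_mul_eq_div_div_swap] using tendsto_sinh_div_self.div_const 2

lemma Real.tendsto_sinh_sub_self_div_pow_three :
    Tendsto (fun u => (sinh u - u) / u ^ 3) (𝓝[≠] 0) (𝓝 (1 / 6)) := by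
  refine HasDerivAt.lhopital_zero_nhdsNE (f' := fun u => cosh u - 1) (g' := fun u => 3 * u ^ 2)
    (.of_forall fun u => (hasDerivAt_sinh u).sub (hasDerivAt_id u))
    (.of_forall fun u => by simpa using hasDerivAt_pow 3 u)
    (eventually_mem_nhdsWithin.mono fun u hu => by simpa using hu) ?_ ?_ ?_
  · exact (Continuous.tendsto' (f := fun u => sinh u - u) (by fun_prop) 0 0 (by simp)).mono_left
      nhdsWithin_le_nhds
  · simpa using (continuous_pow 3).tendsto' (0 : ℝ) 0 (by simp) |>.mono_left nhdsWithin_le_nhds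
  · convert tendsto_cosh_sub_one_div_sq.div_const 3 using 2 <;> ring

lemma Real.tendsto_inv_sq_sub_inv_sinh_sq :
    Tendsto (fun u => 1 / u ^ 2 - 1 / sinh u ^ 2) (𝓝[≠] 0) (𝓝 (1 / 3)) := by
  have hlim := (tendsto_sinh_sub_self_div_pow_three.mul (tendsto_sinh_div_self.add_const 1)).mul
    ((tendsto_sinh_div_self.inv₀ one_ne_zero).pow 2)
  rw [show (1 / 3 : ℝ) = 1 / 6 * (1 + 1) * 1⁻¹ ^ 2 by norm_num]
  refine hlim.congr' (eventually_mem_nhdsWithin.mono fun u (hu : u ≠ 0) => ?_)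
  have hs : sinh u ≠ 0 := sinh_ne_zero.mpr hu
  field_simp
  ring

lemma Real.exp_sub_exp_sq (x y : ℝ) :
    (exp x - exp y) ^ 2 = 4 * exp (x + y) * sinh ((y - x) / 2) ^ 2 := by
  have hx : exp x = exp ((x + y) / 2) * exp (-((y - x) / 2)) := by rw [← exp_add]; ring_nf
  have hy : exp y = exp ((x + y) / 2) * exp ((y - x) / 2) := by rw [← exp_add]; ring_nf
  have hxy : exp (x + y) = exp ((x + y) / 2) ^ 2 := by rw [← exp_nat_mul]; ring_nf
  rw [sinh_eq, hx, hy, hxy]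
  ring

lemma tendsto_inv_sq_sub_mul_exp_div_exp_sub_exp_sq {a b : ℝ} (hab : a ≠ b) :
    Tendsto (fun t => 1 / t ^ 2 - (a - b) ^ 2 * exp ((a + b) * t) / (exp (a * t) - exp (b * t)) ^ 2)
      (𝓝[≠] 0) (𝓝 ((a - b) ^ 2 / 12)) := by
  set c := (b - a) / 2
  have hc : c ≠ 0 := div_ne_zero (sub_ne_zero.mpr hab.symm) two_ne_zero
  have hscale : Tendsto (fun t => c * t) (𝓝[≠] 0) (𝓝[≠] 0) :=
    tendsto_nhdsWithin_of_tendsto_nhds_of_eventually_within _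
      (by simpa using (continuous_const_mul c).tendsto' 0 0 (by simp) |>.mono_left nhdsWithin_le_nhds)
      (eventually_mem_nhdsWithin.mono fun t ht => mul_ne_zero hc ht)
  have hlim := (tendsto_inv_sq_sub_inv_sinh_sq.comp hscale).const_mul (c ^ 2)
  rw [show (a - b) ^ 2 / 12 = c ^ 2 * (1 / 3) by ring]
  refine hlim.congr' (eventually_mem_nhdsWithin.mono fun t (ht : t ≠ 0) => ?_)
  have hs : sinh (c * t) ≠ 0 := sinh_ne_zero.mpr (mul_ne_zero hc ht)
  dsimp only [Function.comp_apply]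
  rw [exp_sub_exp_sq, add_mul, show (b * t - a * t) / 2 = c * t by ring]
  field_simp
  ring

theorem delta_deriv_tendsto_zero_right (a b : ℝ) (hab : a < b) :
    Filter.Tendsto (fun t : ℝ =>
      1 / t ^ 2 - (a - b) ^ 2 * Real.exp ((a + b) * t) /
        (Real.exp (a * t) - Real.exp (b * t)) ^ 2)
      (nhdsWithin 0 (Set.Ioi 0)) (nhds ((a - b) ^ 2 / 12)) :=
  (tendsto_inv_sq_sub_mul_exp_div_exp_sub_exp_sq hab.ne).mono_left (nhdsGT_le_nhdsNE 0)
end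

section
/- Let θ(x) = ln Γ(x) − (x − 1/2)ln x + x − (1/2)ln(2π) be the remainder of Binet's first formula. For every x > 0 and λ > 0 with λ ≠ 1, θ(x/(1+λ)) > (1/2)[θ(x/λ) + θ(x)]. -/
/-!
Binet's remainder θ is strictly decreasing on `(0, ∞)`, and `x / (1 + λ)` lies below both
`x / λ` and `x`, so θ at it exceeds θ at either point and hence their mean.

Monotonicity: `θ' = ψ - log + 1/(2x)`. The defect `D = log - 1/(2x) - ψ` satisfies
`D (x + 1) < D x`, because `ψ (x + 1) = ψ x + 1/x` and `log (x + 1) - log x` is smaller than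
the trapezoid value `(1/x + 1/(x+1))/2` of the convex function `1/t`. Convexity of `log ∘ Γ` gives
`ψ ≤ log`, so `D (x + n) ≥ -1/(2(x + n)) → 0`; hence `D ≥ 0`, and strictly by one more step.
-/

open Filter Topology Set

namespace Real

noncomputable def digamma (x : ℝ) : ℝ := deriv (fun y => log (Gamma y)) x

noncomputable def binetTheta (x : ℝ) : ℝ :=
  log (Gamma x) - (x - 1 / 2) * log x + x - 1 / 2 * log (2 * π)

theorem log_lt_half_sub_inv {y : ℝ} (hy : 1 < y) : log y < (y - y⁻¹) / 2 := by
  rw [← sinh_log (by linarith)]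
  exact self_lt_sinh_iff.2 (log_pos hy)

theorem log_add_one_sub_log_lt {x : ℝ} (hx : 0 < x) :
    log (x + 1) - log x < (x⁻¹ + (x + 1)⁻¹) / 2 := by
  have key := log_lt_half_sub_inv (y := (x + 1) / x) (by rw [one_lt_div hx]; linarith)
  have hrhs : ((x + 1) / x - ((x + 1) / x)⁻¹) / 2 = (x⁻¹ + (x + 1)⁻¹) / 2 := by
    field_simp
    ring
  rwa [log_div (by linarith) hx.ne', hrhs] at key

section LogGamma

variable {x : ℝ}

theorem differentiableAt_log_Gamma (hx : 0 < x) :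
    DifferentiableAt ℝ (fun y => log (Gamma y)) x :=
  have hne : ∀ m : ℕ, x ≠ -m := fun m => by linarith [(m.cast_nonneg : (0 : ℝ) ≤ m)]
  (differentiableAt_Gamma hne).log (Gamma_ne_zero hne)

theorem log_Gamma_add_one (hx : 0 < x) : log (Gamma (x + 1)) = log (Gamma x) + log x := by
  rw [Gamma_add_one hx.ne', log_mul hx.ne' (Gamma_pos_of_pos hx).ne', add_comm]

theorem digamma_add_one (hx : 0 < x) : digamma (x + 1) = digamma x + x⁻¹ := by
  have hlog : (fun y => log (Gamma (y + 1))) =ᶠ[𝓝 x] fun y => log (Gamma y) + log y := by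
    filter_upwards [eventually_gt_nhds hx] with y hy using log_Gamma_add_one hy
  rw [digamma, ← deriv_comp_add_const, hlog.deriv_eq,
    deriv_fun_add (differentiableAt_log_Gamma hx) (differentiableAt_log hx.ne'), deriv_log, digamma]

theorem digamma_le_log (hx : 0 < x) : digamma x ≤ log x := by
  have h := convexOn_log_Gamma.deriv_le_slope (mem_Ioi.2 hx) (mem_Ioi.2 (by linarith))
    (lt_add_one x) (differentiableAt_log_Gamma hx)
  rwa [slope_def_field, Function.comp_apply, Function.comp_apply, log_Gamma_add_one hx,
    add_sub_cancel_left, add_sub_cancel_left, div_one] at h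

theorem log_sub_digamma_add_one_lt (hx : 0 < x) :
    log (x + 1) - (2 * (x + 1))⁻¹ - digamma (x + 1) < log x - (2 * x)⁻¹ - digamma x := by
  have h := log_add_one_sub_log_lt hx
  rw [digamma_add_one hx, mul_inv, mul_inv]
  linarith

theorem digamma_lt_log_sub (hx : 0 < x) : digamma x < log x - (2 * x)⁻¹ := by
  set D : ℝ → ℝ := fun y => log y - (2 * y)⁻¹ - digamma y
  have hanti : Antitone fun n : ℕ => D (x + 1 + n) := antitone_nat_of_succ_le fun n => by
    rw [Nat.cast_succ, ← add_assoc]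
    exact (log_sub_digamma_add_one_lt (by positivity)).le
  have hlow (n : ℕ) : -(2 * (x + 1 + n))⁻¹ ≤ D (x + 1 + n) := by
    linarith [digamma_le_log (x := x + 1 + n) (by positivity)]
  have hlim : Tendsto (fun n : ℕ => -(2 * (x + 1 + n))⁻¹) atTop (𝓝 0) := by
    simpa using (tendsto_inv_atTop_zero.comp (Tendsto.const_mul_atTop two_pos
      (tendsto_atTop_add_const_left _ (x + 1) tendsto_natCast_atTop_atTop))).neg
  have hD : 0 ≤ D (x + 1) := le_of_tendsto' hlim fun n =>
    (hlow n).trans (by simpa using hanti n.zero_le)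
  linarith [log_sub_digamma_add_one_lt hx]

end LogGamma

theorem hasDerivAt_binetTheta {x : ℝ} (hx : 0 < x) :
    HasDerivAt binetTheta (digamma x - log x + (2 * x)⁻¹) x := by
  have h : HasDerivAt binetTheta (digamma x - (1 * log x + (x - 1 / 2) * x⁻¹) + 1) x :=
    ((differentiableAt_log_Gamma hx).hasDerivAt.sub
      (((hasDerivAt_id x).sub_const (1 / 2)).mul (hasDerivAt_log hx.ne'))).add
      (hasDerivAt_id x) |>.sub_const _
  refine h.congr_deriv ?_
  field_simp
  ring

theorem binetTheta_strictAntiOn : StrictAntiOn binetTheta (Ioi 0) := by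
  refine strictAntiOn_of_deriv_neg (convex_Ioi 0)
    (fun x hx => (hasDerivAt_binetTheta hx).continuousAt.continuousWithinAt) fun x hx => ?_
  rw [interior_Ioi] at hx
  rw [(hasDerivAt_binetTheta hx).deriv]
  linarith [digamma_lt_log_sub hx]

end Real

theorem theta_concavity_ineq_general (x lam : ℝ) (hx : 0 < x) (hlam : 0 < lam) :
    (fun y : ℝ => Real.log (Real.Gamma y) - (y - 1 / 2) * Real.log y + y -
        1 / 2 * Real.log (2 * Real.pi)) (x / (1 + lam)) >
      (1 / 2) * ((fun y : ℝ => Real.log (Real.Gamma y) - (y - 1 / 2) * Real.log y + y -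
          1 / 2 * Real.log (2 * Real.pi)) (x / lam) +
        (fun y : ℝ => Real.log (Real.Gamma y) - (y - 1 / 2) * Real.log y + y -
          1 / 2 * Real.log (2 * Real.pi)) x) := by
  change Real.binetTheta (x / (1 + lam)) >
    1 / 2 * (Real.binetTheta (x / lam) + Real.binetTheta x)
  have hx' : 0 < x / (1 + lam) := by positivity
  have h_lt_div : x / (1 + lam) < x / lam := div_lt_div_of_pos_left hx hlam (by linarith)
  have h_lt_self : x / (1 + lam) < x := div_lt_self hx (by linarith)
  have h1 := Real.binetTheta_strictAntiOn hx' (by positivity : 0 < x / lam) h_lt_div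
  have h2 := Real.binetTheta_strictAntiOn hx' hx h_lt_self
  linarith

theorem theta_concavity_ineq (x lam : ℝ) (hx : 0 < x) (hlam : 0 < lam) (hne : lam ≠ 1) :
    (fun y : ℝ => Real.log (Real.Gamma y) - (y - 1 / 2) * Real.log y + y -
        1 / 2 * Real.log (2 * Real.pi)) (x / (1 + lam)) >
      (1 / 2) * ((fun y : ℝ => Real.log (Real.Gamma y) - (y - 1 / 2) * Real.log y + y -
          1 / 2 * Real.log (2 * Real.pi)) (x / lam) +
        (fun y : ℝ => Real.log (Real.Gamma y) - (y - 1 / 2) * Real.log y + y -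
          1 / 2 * Real.log (2 * Real.pi)) x) :=
  theta_concavity_ineq_general x lam hx hlam
end
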